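/- Fix β ∈ (0,1], σ_p, σ_S > 0 and λ > 0, and suppose (1−β)σ_p² < β·σ_S². Then t* := −(1/λ)·log( σ_p² / (β(σ_p² + σ_S²)) ) satisfies t* > 0, and η* = exp(−λt*) is the unique η ∈ (0,1] solving (1 − βη)/(βη) = σ_S²/σ_p², i.e. the unique solution of the zero-bias equation (1 − βη)·βη·σ_p² = (βη)²·σ_S². -/

import Mathlib

/-!
Writing `x = βη`, the zero-bias equation `(1 - x) x σ_p² = x² σ_S²` has, for `x ≠ 0`, the
single solution `x = σ_p² / (σ_p² + σ_S²)`; so `η* = σ_p² / (β (σ_p² + σ_S²))`, which is exactly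
`exp (-λ t*)`. The hypothesis `(1 - β) σ_p² < β σ_S²` says that this `η*` is less than `1`, i.e.
that `log η* < 0` and hence `t* > 0`.
-/

open Real

section ZeroBias

variable {p s x : ℝ}

theorem one_sub_mul_eq_mul_iff_eq_div (hps : p + s ≠ 0) :
    (1 - x) * p = x * s ↔ x = p / (p + s) := by
  rw [eq_div_iff hps]
  constructor <;> intro h <;> linarith

theorem one_sub_div_eq_div_iff_eq_div (hx : x ≠ 0) (hp : p ≠ 0) (hps : p + s ≠ 0) :
    (1 - x) / x = s / p ↔ x = p / (p + s) := by
  rw [div_eq_div_iff hx hp, mul_comm s x, one_sub_mul_eq_mul_iff_eq_div hps]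

theorem one_sub_mul_mul_eq_sq_mul_iff_eq_div (hx : x ≠ 0) (hps : p + s ≠ 0) :
    (1 - x) * x * p = x ^ 2 * s ↔ x = p / (p + s) := by
  rw [← one_sub_mul_eq_mul_iff_eq_div hps, mul_right_comm, sq, mul_assoc x x s, mul_comm x,
    mul_left_inj' hx]

end ZeroBias

theorem exp_neg_mul_neg_one_div_mul_log {l a : ℝ} (hl : l ≠ 0) (ha : 0 < a) :
    exp (-l * (-(1 / l) * log a)) = a := by
  rw [← mul_assoc, neg_mul_neg, mul_one_div_cancel hl, one_mul, exp_log ha]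

theorem neg_one_div_mul_log_pos {l a : ℝ} (hl : 0 < l) (ha₀ : 0 < a) (ha₁ : a < 1) :
    0 < -(1 / l) * log a :=
  mul_pos_of_neg_of_neg (neg_neg_of_pos (one_div_pos.mpr hl)) (log_neg ha₀ ha₁)

theorem zero_bias_time_closed_form_general
    (β σp σS l : ℝ) (hβ : β ∈ Set.Ioc (0 : ℝ) 1)
    (hσp : 0 < σp) (hl : 0 < l)
    (h : (1 - β) * σp ^ 2 < β * σS ^ 2)
    (tstar ηstar : ℝ)
    (htstar : tstar = -(1 / l) * Real.log (σp ^ 2 / (β * (σp ^ 2 + σS ^ 2))))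
    (hηstar : ηstar = Real.exp (-l * tstar)) :
    0 < tstar
    ∧ ηstar ∈ Set.Ioc (0 : ℝ) 1
    ∧ (1 - β * ηstar) / (β * ηstar) = σS ^ 2 / σp ^ 2
    ∧ (1 - β * ηstar) * (β * ηstar) * σp ^ 2 = (β * ηstar) ^ 2 * σS ^ 2
    ∧ ∀ η ∈ Set.Ioc (0 : ℝ) 1,
        (1 - β * η) * (β * η) * σp ^ 2 = (β * η) ^ 2 * σS ^ 2 → η = ηstar := by
  have hβ₀ : 0 < β := hβ.1
  have hsum : 0 < σp ^ 2 + σS ^ 2 := by positivity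
  have hη₀ : 0 < σp ^ 2 / (β * (σp ^ 2 + σS ^ 2)) := by positivity
  have hη₁ : σp ^ 2 / (β * (σp ^ 2 + σS ^ 2)) < 1 := by
    rw [div_lt_one (by positivity)]
    linarith
  have hηstar_eq : ηstar = σp ^ 2 / (β * (σp ^ 2 + σS ^ 2)) := by
    rw [hηstar, htstar, exp_neg_mul_neg_one_div_mul_log hl.ne' hη₀]
  have hβηstar : β * ηstar = σp ^ 2 / (σp ^ 2 + σS ^ 2) := by
    rw [hηstar_eq, mul_div_assoc', mul_div_mul_left _ _ hβ₀.ne']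
  have hβηstar₀ : β * ηstar ≠ 0 := by rw [hηstar_eq]; positivity
  refine ⟨htstar ▸ neg_one_div_mul_log_pos hl hη₀ hη₁, hηstar_eq ▸ ⟨hη₀, hη₁.le⟩,
    (one_sub_div_eq_div_iff_eq_div hβηstar₀ (by positivity) hsum.ne').mpr hβηstar,
    (one_sub_mul_mul_eq_sq_mul_iff_eq_div hβηstar₀ hsum.ne').mpr hβηstar, ?_⟩
  rintro η ⟨hη₀', -⟩ hη
  have hβη := (one_sub_mul_mul_eq_sq_mul_iff_eq_div (by positivity) hsum.ne').mp hη
  exact mul_left_cancel₀ hβ₀.ne' (hβη.trans hβηstar.symm)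

/-- Explicit closed-form zero-bias time of Proposition 2 for `ξ = 1`: if
`(1−β)σ_p² < βσ_S²`, then `t* = −(1/λ)·log(σ_p²/(β(σ_p² + σ_S²)))` is positive,
and `η* = exp(−λt*)` is the unique `η ∈ (0,1]` solving
`(1 − βη)/(βη) = σ_S²/σ_p²`, i.e. the unique solution of the zero-bias
equation `(1 − βη)·βη·σ_p² = (βη)²·σ_S²`. -/
theorem zero_bias_time_closed_form
    (β σp σS l : ℝ) (hβ : β ∈ Set.Ioc (0 : ℝ) 1)
    (hσp : 0 < σp) (hσS : 0 < σS) (hl : 0 < l)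
    (h : (1 - β) * σp ^ 2 < β * σS ^ 2)
    (tstar ηstar : ℝ)
    (htstar : tstar = -(1 / l) * Real.log (σp ^ 2 / (β * (σp ^ 2 + σS ^ 2))))
    (hηstar : ηstar = Real.exp (-l * tstar)) :
    0 < tstar
    ∧ ηstar ∈ Set.Ioc (0 : ℝ) 1
    ∧ (1 - β * ηstar) / (β * ηstar) = σS ^ 2 / σp ^ 2
    ∧ (1 - β * ηstar) * (β * ηstar) * σp ^ 2 = (β * ηstar) ^ 2 * σS ^ 2
    ∧ ∀ η ∈ Set.Ioc (0 : ℝ) 1,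
        (1 - β * η) * (β * η) * σp ^ 2 = (β * η) ^ 2 * σS ^ 2 → η = ηstar :=
  zero_bias_time_closed_form_general β σp σS l hβ hσp hl h tstar ηstar htstar hηstar
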